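/- In the Verma module of 𝔤̃ with highest weight (h, μ, ρ₁, ρ₂), for any two subsets partitioning the level n = a + b and partitions A ⊢ a, B ⊢ b, the mixed inner product factorizes: ⟨(LJ)_{-A}(P¹P²)_{-B}|0⟩, (LJ)_{-B}(P¹P²)_{-A}|0⟩⟩ = ⟨(LJ)_{-A}|0⟩, (P¹P²)_{-A}|0⟩⟩ · ⟨(P¹P²)_{-B}|0⟩, (LJ)_{-B}|0⟩⟩. Verify this in the level-2 case A = (1), B = (1): ⟨ω(L_{-1}P^1_{-1})·J_{-1}P^2_{-1}|0⟩ factorizes as ⟨0|L_1 P^2_{-1}|0⟩·⟨0|P^1_1 J_{-1}|0⟩. -/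

import Mathlib

/-!
Write the modes as letters `(n, k)` whose kinds `k` split into those of the subalgebra
`l = ⟨L, J⟩` and those of the abelian ideal `p = ⟨P¹, P²⟩`. Since `[l, p] ⊆ p` and `[p, p] = 0`,
every lowering `P` has to be absorbed by a raising `L`/`J`, so the vacuum expectation of a word
vanishes when it has fewer raising `l`-letters than lowering `p`-letters, and, by the symmetry
`ω`, when it has fewer lowering `l`-letters than raising `p`-letters. The mixed word sits exactly
on both boundaries. Commuting a lowering `L`/`J` of the ket to the left, its contractions with
the raising `L`/`J` therefore vanish, and only its contractions with the raising `P`s at total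
mode zero survive. These give the same recursion for both sides of the factorization.
-/

/-- `ε_{12} = -ε_{21} = 1`. -/
def eps : Fin 2 → Fin 2 → ℤ := fun i j =>
  if i = 0 ∧ j = 1 then 1 else if i = 1 ∧ j = 0 then -1 else 0

open MulOpposite

section RingLie

variable {A : Type*} [Ring A]

lemma Ring.lie_eq_neg_lie (x y : A) : ⁅x, y⁆ = -⁅y, x⁆ := by
  simp [Ring.lie_def]

lemma MulOpposite.lie_op_op (x y : A) : ⁅op x, op y⁆ = op ⁅y, x⁆ := by
  simp [Ring.lie_def]

end RingLie

section Charge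

variable {κ : Type*} (p : κ → Bool)

def letterCharge (a : ℤ × κ) : ℤ :=
  if p a.2 then (if a.1 < 0 then -1 else 0) else (if 0 < a.1 then 1 else 0)

def charge (w : List (ℤ × κ)) : ℤ := (w.map (letterCharge p)).sum

def flipMode (a : ℤ × κ) : ℤ × κ := (-a.1, a.2)

def coCharge (w : List (ℤ × κ)) : ℤ := charge p (w.map flipMode)

@[simp] lemma charge_nil : charge p [] = 0 := rfl

@[simp] lemma charge_cons (a : ℤ × κ) (w : List (ℤ × κ)) :
    charge p (a :: w) = letterCharge p a + charge p w := List.sum_cons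

@[simp] lemma charge_append (u w : List (ℤ × κ)) :
    charge p (u ++ w) = charge p u + charge p w := by
  simp [charge]

@[simp] lemma charge_reverse (w : List (ℤ × κ)) : charge p w.reverse = charge p w := by
  simp [charge, List.sum_reverse]

@[simp] lemma coCharge_nil : coCharge p [] = 0 := rfl

@[simp] lemma coCharge_cons (a : ℤ × κ) (w : List (ℤ × κ)) :
    coCharge p (a :: w) = letterCharge p (flipMode a) + coCharge p w := List.sum_cons

@[simp] lemma coCharge_append (u w : List (ℤ × κ)) :
    coCharge p (u ++ w) = coCharge p u + coCharge p w := by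
  simp [coCharge]

lemma charge_eq_of_forall {w : List (ℤ × κ)} {c d : ℤ}
    (hw : ∀ a ∈ w, letterCharge p a = c ∧ letterCharge p (flipMode a) = d) :
    charge p w = w.length * c ∧ coCharge p w = w.length * d := by
  induction w with
  | nil => simp [coCharge]
  | cons a w ih =>
    obtain ⟨h1, h2⟩ := hw a List.mem_cons_self
    obtain ⟨ih1, ih2⟩ := ih fun b hb => hw b (List.mem_cons_of_mem a hb)
    simp only [charge_cons, coCharge_cons, List.length_cons, h1, h2, ih1, ih2]
    constructor <;> push_cast <;> ring

lemma letterCharge_add_le {a b : ℤ × κ} {k : κ} (ha : 0 < a.1)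
    (hk : p k = (p a.2 || p b.2)) (hab : ¬(p a.2 = true ∧ p b.2 = true)) :
    letterCharge p (a.1 + b.1, k) ≤ letterCharge p a + letterCharge p b := by
  cases hpa : p a.2 <;> cases hpb : p b.2 <;> simp only [hpa, hpb] at hab <;>
    simp [letterCharge, hk, hpa, hpb] at hab ⊢ <;> split_ifs <;> omega

lemma letterCharge_of_pos {a : ℤ × κ} (ha : 0 < a.1) :
    letterCharge p a = (if p a.2 then 0 else 1) ∧
      letterCharge p (flipMode a) = (if p a.2 then -1 else 0) := by
  simp [letterCharge, flipMode, ha, ha.not_gt]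

lemma letterCharge_of_neg {a : ℤ × κ} (ha : a.1 < 0) :
    letterCharge p a = (if p a.2 then -1 else 0) ∧
      letterCharge p (flipMode a) = (if p a.2 then 0 else 1) := by
  simp [letterCharge, flipMode, ha, ha.not_gt]

lemma charge_of_pos_inIdeal {w : List (ℤ × κ)} (hw : ∀ a ∈ w, 0 < a.1 ∧ p a.2) :
    charge p w = 0 ∧ coCharge p w = -w.length := by
  have h := charge_eq_of_forall p (c := 0) (d := -1) fun a ha => by
    simpa [(hw a ha).2] using letterCharge_of_pos p (hw a ha).1
  simpa using h

lemma charge_of_pos_not_inIdeal {w : List (ℤ × κ)} (hw : ∀ a ∈ w, 0 < a.1 ∧ p a.2 = false) :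
    charge p w = w.length ∧ coCharge p w = 0 := by
  have h := charge_eq_of_forall p (c := 1) (d := 0) fun a ha => by
    simpa [(hw a ha).2] using letterCharge_of_pos p (hw a ha).1
  simpa using h

lemma charge_of_neg_not_inIdeal {w : List (ℤ × κ)} (hw : ∀ a ∈ w, a.1 < 0 ∧ p a.2 = false) :
    charge p w = 0 ∧ coCharge p w = w.length := by
  have h := charge_eq_of_forall p (c := 0) (d := 1) fun a ha => by
    simpa [(hw a ha).2] using letterCharge_of_neg p (hw a ha).1
  simpa using h

lemma charge_of_neg_inIdeal {w : List (ℤ × κ)} (hw : ∀ a ∈ w, a.1 < 0 ∧ p a.2) :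
    charge p w = -w.length ∧ coCharge p w = 0 := by
  have h := charge_eq_of_forall p (c := -1) (d := 0) fun a ha => by
    simpa [(hw a ha).2] using letterCharge_of_neg p (hw a ha).1
  simpa using h

end Charge

/-- Modes `X (n, k)` spanning a `ℤ`-graded Lie algebra `l ⋉ p` inside `A`, where `p` is the
abelian ideal spanned by the kinds with `inIdeal`, together with the vacuum expectation `v` of a
highest-weight module with highest weight `weight`. -/
structure VacuumModes (R A κ : Type*) [CommRing R] [Ring A] [Algebra R A] where
  inIdeal : κ → Bool
  X : ℤ × κ → A
  coeff : ℤ × κ → ℤ × κ → List (R × κ)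
  central : ℤ × κ → ℤ × κ → R
  lie_X : ∀ a b, ⁅X a, X b⁆ =
    ((coeff a b).map fun c => c.1 • X (a.1 + b.1, c.2)).sum + central a b • (1 : A)
  inIdeal_of_mem_coeff : ∀ a b c, c ∈ coeff a b → inIdeal c.2 = (inIdeal a.2 || inIdeal b.2)
  coeff_eq_nil : ∀ a b, inIdeal a.2 → inIdeal b.2 → coeff a b = []
  central_eq_zero : ∀ a b, (inIdeal a.2 || inIdeal b.2) → central a b = 0
  v : A →ₗ[R] R
  v_one : v 1 = 1
  v_mul_X_of_pos : ∀ x a, 0 < a.1 → v (x * X a) = 0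
  v_X_mul_of_neg : ∀ x a, a.1 < 0 → v (X a * x) = 0
  weight : κ → R
  v_mul_X_zero : ∀ x k, v (x * X (0, k)) = weight k * v x
  v_X_zero_mul : ∀ x k, v (X (0, k) * x) = weight k * v x

namespace VacuumModes

variable {R A κ : Type*} [CommRing R] [Ring A] [Algebra R A] (S : VacuumModes R A κ)

def W (w : List (ℤ × κ)) : A := (w.map S.X).prod

@[simp] lemma W_nil : S.W [] = 1 := rfl

@[simp] lemma W_cons (a : ℤ × κ) (w : List (ℤ × κ)) : S.W (a :: w) = S.X a * S.W w :=
  List.prod_cons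

@[simp] lemma W_append (u w : List (ℤ × κ)) : S.W (u ++ w) = S.W u * S.W w := by
  simp [W]

lemma v_W_swap (u t : List (ℤ × κ)) (a b : ℤ × κ) :
    S.v (S.W (u ++ a :: b :: t)) = S.v (S.W (u ++ b :: a :: t))
      + ((S.coeff a b).map fun c => c.1 * S.v (S.W (u ++ (a.1 + b.1, c.2) :: t))).sum
      + S.central a b * S.v (S.W (u ++ t)) := by
  let f : A →ₗ[R] R := S.v ∘ₗ LinearMap.mulLeft R (S.W u) ∘ₗ LinearMap.mulRight R (S.W t)
  have key : f (S.X a * S.X b) = f (S.X b * S.X a) + f ⁅S.X a, S.X b⁆ := by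
    rw [← map_add, Ring.lie_def, add_sub_cancel]
  rw [S.lie_X, map_add, map_smul, map_list_sum, List.map_map] at key
  simpa [f, mul_assoc, add_assoc, Function.comp_def] using key

-- The raising letter `a` is commuted to the right end, where it annihilates the vacuum; the
-- commutators produced on the way are shorter words whose charge is still negative.
theorem v_W_eq_zero_of_pos_of_charge_neg {n : ℕ}
    (ih : ∀ w : List (ℤ × κ), w.length < n → charge S.inIdeal w < 0 → S.v (S.W w) = 0)
    (t u : List (ℤ × κ)) {a : ℤ × κ} (ha : 0 < a.1) (hlen : (u ++ a :: t).length = n)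
    (hneg : charge S.inIdeal (u ++ a :: t) < 0) : S.v (S.W (u ++ a :: t)) = 0 := by
  induction t generalizing u with
  | nil => simpa using S.v_mul_X_of_pos (S.W u) a ha
  | cons b t iht =>
    simp only [List.length_append, List.length_cons, charge_append, charge_cons] at hlen hneg
    have hswap : S.v (S.W (u ++ b :: a :: t)) = 0 := by
      simpa using iht (u ++ [b]) (by simp; omega) (by simp; linarith)
    have hcoeff : ∀ c ∈ S.coeff a b, S.v (S.W (u ++ (a.1 + b.1, c.2) :: t)) = 0 := by
      intro c hc
      have hle := letterCharge_add_le S.inIdeal ha (S.inIdeal_of_mem_coeff a b c hc)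
        fun h => by simp [S.coeff_eq_nil a b h.1 h.2] at hc
      exact ih _ (by simp; omega) (by simp; linarith)
    have hcentral : S.central a b * S.v (S.W (u ++ t)) = 0 := by
      cases hab : (S.inIdeal a.2 || S.inIdeal b.2)
      · have hpos : 0 < letterCharge S.inIdeal a + letterCharge S.inIdeal b := by
          simp only [Bool.or_eq_false_iff] at hab
          simp only [letterCharge, hab.1, hab.2, Bool.false_eq_true, if_false, if_pos ha]
          split_ifs <;> omega
        rw [ih _ (by simp; omega) (by simp; linarith), mul_zero]
      · rw [S.central_eq_zero a b hab, zero_mul]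
    rw [S.v_W_swap, hswap, List.sum_eq_zero, hcentral]
    · simp
    · simp only [List.mem_map]
      rintro _ ⟨c, hc, rfl⟩
      rw [hcoeff c hc, mul_zero]

theorem v_W_eq_zero_of_charge_neg (w : List (ℤ × κ)) (hw : charge S.inIdeal w < 0) :
    S.v (S.W w) = 0 := by
  induction hn : w.length using Nat.strong_induction_on generalizing w with
  | _ n ih =>
    cases w with
    | nil => simp at hw
    | cons a t =>
      rcases lt_trichotomy a.1 0 with ha | ha | ha
      · simpa using S.v_X_mul_of_neg (S.W t) a ha
      · obtain ⟨m, k⟩ := a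
        obtain rfl : m = 0 := ha
        have ht : charge S.inIdeal t < 0 := by simpa [letterCharge] using hw
        rw [W_cons, S.v_X_zero_mul, ih t.length (by simp [← hn]) t ht rfl, mul_zero]
      · exact S.v_W_eq_zero_of_pos_of_charge_neg (fun w' hlen hw' => ih _ hlen w' hw' rfl)
          t [] ha hn hw

/-- The anti-automorphism `ω`, realised on `Aᵐᵒᵖ`. -/
def mirror : VacuumModes R Aᵐᵒᵖ κ where
  inIdeal := S.inIdeal
  X a := op (S.X (flipMode a))
  coeff a b := S.coeff (flipMode b) (flipMode a)
  central a b := S.central (flipMode b) (flipMode a)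
  lie_X a b := by
    rw [lie_op_op, S.lie_X, op_add, ← opAddEquiv_apply, map_list_sum]
    simp [flipMode, List.map_map, Function.comp_def, add_comm]
  inIdeal_of_mem_coeff a b c hc := by
    rw [S.inIdeal_of_mem_coeff _ _ c hc, Bool.or_comm]; rfl
  coeff_eq_nil a b ha hb := S.coeff_eq_nil _ _ hb ha
  central_eq_zero a b h := S.central_eq_zero _ _ (by rwa [Bool.or_comm])
  v := S.v ∘ₗ (opLinearEquiv R).symm.toLinearMap
  v_one := S.v_one
  v_mul_X_of_pos x a ha := S.v_X_mul_of_neg (unop x) (flipMode a) (by simp [flipMode, ha])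
  v_X_mul_of_neg x a ha := S.v_mul_X_of_pos (unop x) (flipMode a) (by simp [flipMode, ha])
  weight := S.weight
  v_mul_X_zero x k := by simpa [flipMode] using S.v_X_zero_mul (unop x) k
  v_X_zero_mul x k := by simpa [flipMode] using S.v_mul_X_zero (unop x) k

lemma mirror_W (w : List (ℤ × κ)) : S.mirror.W w = op (S.W (w.map flipMode).reverse) := by
  simp [W, mirror, op_list_prod, List.map_reverse, List.map_map, Function.comp_def]

theorem v_W_eq_zero_of_coCharge_neg (w : List (ℤ × κ)) (hw : coCharge S.inIdeal w < 0) :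
    S.v (S.W w) = 0 := by
  have h := S.mirror.v_W_eq_zero_of_charge_neg (w.map flipMode).reverse (by
    simpa [mirror, coCharge] using hw)
  rw [mirror_W, List.map_reverse, List.reverse_reverse, List.map_map] at h
  simpa [mirror, Function.comp_def, flipMode] using h

theorem v_W_swap_of_not_inIdeal (u t : List (ℤ × κ)) {a b : ℤ × κ} (ha : 0 < a.1)
    (hb : b.1 < 0) (hpa : S.inIdeal a.2 = false) (hpb : S.inIdeal b.2 = false)
    (h₁ : charge S.inIdeal (u ++ a :: b :: t) ≤ 0)
    (h₂ : coCharge S.inIdeal (u ++ a :: b :: t) ≤ 0) :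
    S.v (S.W (u ++ a :: b :: t)) = S.v (S.W (u ++ b :: a :: t)) := by
  obtain ⟨ca, ca'⟩ := letterCharge_of_pos S.inIdeal ha
  obtain ⟨cb, cb'⟩ := letterCharge_of_neg S.inIdeal hb
  simp only [hpa, hpb, Bool.false_eq_true, if_false] at ca ca' cb cb'
  simp only [charge_append, charge_cons, coCharge_append, coCharge_cons] at h₁ h₂
  have hcoeff : ∀ c ∈ S.coeff a b, S.v (S.W (u ++ (a.1 + b.1, c.2) :: t)) = 0 := by
    intro c hc
    have hpc : S.inIdeal c.2 = false := by rw [S.inIdeal_of_mem_coeff a b c hc, hpa, hpb]; rfl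
    rcases le_or_gt (a.1 + b.1) 0 with hab | hab
    · apply S.v_W_eq_zero_of_charge_neg
      have : letterCharge S.inIdeal (a.1 + b.1, c.2) = 0 := by
        simp [letterCharge, hpc, hab.not_gt]
      simp only [charge_append, charge_cons]; omega
    · apply S.v_W_eq_zero_of_coCharge_neg
      have : letterCharge S.inIdeal (flipMode (a.1 + b.1, c.2)) = 0 := by
        simp [letterCharge, flipMode, hpc]; omega
      simp only [coCharge_append, coCharge_cons]; omega
  have hcentral : S.v (S.W (u ++ t)) = 0 :=
    S.v_W_eq_zero_of_charge_neg _ (by simp only [charge_append]; omega)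
  rw [S.v_W_swap, List.sum_eq_zero, hcentral]
  · simp
  · simp only [List.mem_map]
    rintro _ ⟨c, hc, rfl⟩
    rw [hcoeff c hc, mul_zero]

theorem v_W_move_left (x u t : List (ℤ × κ)) {b : ℤ × κ}
    (hx : ∀ a ∈ x, 0 < a.1 ∧ S.inIdeal a.2 = false) (hb : b.1 < 0)
    (hpb : S.inIdeal b.2 = false) (h₁ : charge S.inIdeal (u ++ x ++ b :: t) ≤ 0)
    (h₂ : coCharge S.inIdeal (u ++ x ++ b :: t) ≤ 0) :
    S.v (S.W (u ++ x ++ b :: t)) = S.v (S.W (u ++ b :: (x ++ t))) := by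
  induction x generalizing u with
  | nil => simp
  | cons a x ih =>
    obtain ⟨ha, hpa⟩ := hx a List.mem_cons_self
    simp only [charge_append, charge_cons, coCharge_append, coCharge_cons] at h₁ h₂ ih
    have h := ih (u ++ [a]) (fun c hc => hx c (List.mem_cons_of_mem a hc))
      (by simp; linarith) (by simp; linarith)
    simp only [List.append_assoc, List.cons_append, List.nil_append] at h ⊢
    rw [h, S.v_W_swap_of_not_inIdeal u _ ha hb hpa hpb (by simp; linarith) (by simp; linarith)]

lemma X_mul_X_of_inIdeal {a b : ℤ × κ} (ha : S.inIdeal a.2) (hb : S.inIdeal b.2) :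
    S.X a * S.X b = S.X b * S.X a := by
  have h := S.lie_X a b
  rw [S.coeff_eq_nil a b ha hb, S.central_eq_zero a b (by simp [ha]), Ring.lie_def] at h
  simpa [sub_eq_zero] using h

lemma W_append_cons_of_inIdeal (u t : List (ℤ × κ)) {b : ℤ × κ}
    (hu : ∀ a ∈ u, S.inIdeal a.2) (hb : S.inIdeal b.2) :
    S.W (u ++ b :: t) = S.X b * S.W (u ++ t) := by
  induction u with
  | nil => simp
  | cons a u ih =>
    simp only [List.cons_append, W_cons, ih fun c hc => hu c (List.mem_cons_of_mem a hc),
      ← mul_assoc, S.X_mul_X_of_inIdeal (hu a List.mem_cons_self) hb]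

def pairing (a b : ℤ × κ) : R :=
  if a.1 + b.1 = 0 then ((S.coeff a b).map fun c => c.1 * S.weight c.2).sum else 0

theorem v_W_contract (u t : List (ℤ × κ)) {a b : ℤ × κ} (hu : ∀ c ∈ u, S.inIdeal c.2)
    (ha : 0 < a.1) (hpa : S.inIdeal a.2) (hb : b.1 < 0) (hpb : S.inIdeal b.2 = false)
    (h₁ : charge S.inIdeal (u ++ a :: b :: t) ≤ 0)
    (h₂ : coCharge S.inIdeal (u ++ a :: b :: t) ≤ 0) :
    S.v (S.W (u ++ a :: b :: t)) =
      S.v (S.W (u ++ b :: a :: t)) + S.pairing a b * S.v (S.W (u ++ t)) := by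
  rw [S.v_W_swap, S.central_eq_zero a b (by simp [hpa]), zero_mul, add_zero, pairing]
  congr 1
  split_ifs with hab
  · rw [← List.sum_map_mul_right]
    refine congrArg List.sum (List.map_congr_left fun c hc => ?_)
    have hpc : S.inIdeal c.2 := by simp [S.inIdeal_of_mem_coeff a b c hc, hpa]
    rw [hab, S.W_append_cons_of_inIdeal u t hu hpc, S.v_X_zero_mul, mul_assoc]
  · obtain ⟨ca, ca'⟩ := letterCharge_of_pos S.inIdeal ha
    obtain ⟨cb, cb'⟩ := letterCharge_of_neg S.inIdeal hb
    simp only [hpa, hpb, Bool.false_eq_true, if_false, if_true] at ca ca' cb cb'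
    simp only [charge_append, charge_cons, coCharge_append, coCharge_cons] at h₁ h₂
    rw [zero_mul]
    refine List.sum_eq_zero fun z hz => ?_
    obtain ⟨c, hc, rfl⟩ := List.mem_map.mp hz
    have hpc : S.inIdeal c.2 := by simp [S.inIdeal_of_mem_coeff a b c hc, hpa]
    rcases lt_or_gt_of_ne hab with hab | hab
    · obtain ⟨cc, -⟩ := letterCharge_of_neg S.inIdeal (a := (a.1 + b.1, c.2)) hab
      simp only [hpc, if_true] at cc
      rw [S.v_W_eq_zero_of_charge_neg _ (by simp only [charge_append, charge_cons]; omega),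
        mul_zero]
    · obtain ⟨-, cc⟩ := letterCharge_of_pos S.inIdeal (a := (a.1 + b.1, c.2)) hab
      simp only [hpc, if_true] at cc
      rw [S.v_W_eq_zero_of_coCharge_neg _ (by simp only [coCharge_append, coCharge_cons]; omega),
        mul_zero]

-- The lowering letter `b` is commuted to the left through the raising ideal letters `u`: by
-- `v_W_contract` each of them contributes a pairing term, on which the factorization for the
-- shorter words applies.
theorem v_W_factor_cons (x y r : List (ℤ × κ)) {b : ℤ × κ}
    (hx : ∀ a ∈ x, 0 < a.1 ∧ S.inIdeal a.2 = false) (hb : b.1 < 0) (hpb : S.inIdeal b.2 = false)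
    (hy : ∀ a ∈ y, a.1 < 0 ∧ S.inIdeal a.2 = false) (hr : ∀ a ∈ r, a.1 < 0 ∧ S.inIdeal a.2)
    (hxr : x.length = r.length)
    (ih : ∀ q : List (ℤ × κ), (∀ a ∈ q, 0 < a.1 ∧ S.inIdeal a.2) → q.length = y.length →
      S.v (S.W (q ++ x ++ y ++ r)) = S.v (S.W (x ++ r)) * S.v (S.W (q ++ y)))
    (u s : List (ℤ × κ)) (hus : ∀ a ∈ u ++ s, 0 < a.1 ∧ S.inIdeal a.2)
    (hlen : u.length + s.length = y.length + 1) :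
    S.v (S.W (u ++ b :: (s ++ (x ++ (y ++ r))))) =
      S.v (S.W (x ++ r)) * S.v (S.W (u ++ b :: (s ++ y))) := by
  induction u using List.reverseRecOn generalizing s with
  | nil => simp [S.v_X_mul_of_neg _ _ hb]
  | append_singleton u a ihu =>
    simp only [List.append_assoc, List.singleton_append, List.length_append,
      List.length_singleton] at hus hlen ⊢
    obtain ⟨ha, hpa⟩ := hus a (by simp)
    have hu : ∀ c ∈ u, 0 < c.1 ∧ S.inIdeal c.2 := fun c hc => hus c (by simp [hc])
    have hs : ∀ c ∈ s, 0 < c.1 ∧ S.inIdeal c.2 := fun c hc => hus c (by simp [hc])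
    obtain ⟨cx, cx'⟩ := charge_of_pos_not_inIdeal S.inIdeal hx
    obtain ⟨cy, cy'⟩ := charge_of_neg_not_inIdeal S.inIdeal hy
    obtain ⟨cr, cr'⟩ := charge_of_neg_inIdeal S.inIdeal hr
    obtain ⟨cu, cu'⟩ := charge_of_pos_inIdeal S.inIdeal hu
    obtain ⟨cs, cs'⟩ := charge_of_pos_inIdeal S.inIdeal hs
    obtain ⟨ca, ca'⟩ := letterCharge_of_pos S.inIdeal ha
    obtain ⟨cb, cb'⟩ := letterCharge_of_neg S.inIdeal hb
    simp only [hpa, hpb, Bool.false_eq_true, if_true, if_false] at ca ca' cb cb'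
    have hu' : ∀ c ∈ u, S.inIdeal c.2 := fun c hc => (hu c hc).2
    rw [S.v_W_contract u _ hu' ha hpa hb hpb (by simp; omega) (by simp; omega),
      S.v_W_contract u _ hu' ha hpa hb hpb (by simp; omega) (by simp; omega)]
    have h₁ := ihu (a :: s) (by simpa using hus) (by simp; omega)
    have h₂ := ih (u ++ s) (fun c hc => hus c (by simp at hc ⊢; tauto)) (by simp; omega)
    simp only [List.cons_append, List.append_assoc] at h₁ h₂
    rw [h₁, h₂]
    ring

theorem v_W_factor (q x y r : List (ℤ × κ))
    (hq : ∀ a ∈ q, 0 < a.1 ∧ S.inIdeal a.2) (hx : ∀ a ∈ x, 0 < a.1 ∧ S.inIdeal a.2 = false)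
    (hy : ∀ a ∈ y, a.1 < 0 ∧ S.inIdeal a.2 = false) (hr : ∀ a ∈ r, a.1 < 0 ∧ S.inIdeal a.2)
    (hqy : q.length = y.length) (hxr : x.length = r.length) :
    S.v (S.W (q ++ x ++ y ++ r)) = S.v (S.W (x ++ r)) * S.v (S.W (q ++ y)) := by
  induction y generalizing q with
  | nil =>
    obtain rfl : q = [] := List.eq_nil_of_length_eq_zero hqy
    simp [S.v_one]
  | cons b y ih =>
    obtain ⟨hb, hpb⟩ := hy b List.mem_cons_self
    have hy' : ∀ a ∈ y, a.1 < 0 ∧ S.inIdeal a.2 = false :=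
      fun a ha => hy a (List.mem_cons_of_mem b ha)
    obtain ⟨cx, cx'⟩ := charge_of_pos_not_inIdeal S.inIdeal hx
    obtain ⟨cy, cy'⟩ := charge_of_neg_not_inIdeal S.inIdeal hy'
    obtain ⟨cr, cr'⟩ := charge_of_neg_inIdeal S.inIdeal hr
    obtain ⟨cq, cq'⟩ := charge_of_pos_inIdeal S.inIdeal hq
    obtain ⟨cb, cb'⟩ := letterCharge_of_neg S.inIdeal hb
    simp only [hpb, Bool.false_eq_true, if_false] at cb cb'
    simp only [List.length_cons] at hqy
    have hmove := S.v_W_move_left x q (y ++ r) hx hb hpb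
      (by simp only [charge_append, charge_cons]; omega)
      (by simp only [coCharge_append, coCharge_cons]; omega)
    rw [show q ++ x ++ b :: y ++ r = q ++ x ++ b :: (y ++ r) by simp, hmove]
    simpa using S.v_W_factor_cons x y r hx hb hpb hy' hr hxr (fun q' hq' => ih q' hq' hy')
      q [] (by simpa using hq) (by simpa using hqy)

end VacuumModes

inductive GKind
  | L
  | J
  | P (i : Fin 2)

namespace GKind

def lj (b : Bool) : GKind := if b then .L else .J

def inIdeal : GKind → Bool
  | P _ => true
  | _ => false

lemma inIdeal_lj (b : Bool) : inIdeal (lj b) = false := by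
  cases b <;> rfl

section

variable {A : Type*} (L J : ℤ → A) (P : Fin 2 → ℤ → A)

def gen : ℤ × GKind → A
  | (n, .L) => L n
  | (n, .J) => J n
  | (n, .P i) => P i n

lemma gen_P (n : ℤ) (i : Fin 2) : gen L J P (n, .P i) = P i n := rfl

lemma gen_lj (n : ℤ) (b : Bool) : gen L J P (n, lj b) = if b then L n else J n := by
  cases b <;> rfl

end

section

variable {A : Type*} [Ring A] [Algebra ℂ A] (L J : ℤ → A) (P : Fin 2 → ℤ → A)

def coeff : ℤ × GKind → ℤ × GKind → List (ℂ × GKind)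
  | (m, .L), (n, .L) => [(((m - n : ℤ) : ℂ), .L)]
  | (_, .L), (n, .J) => [(((-n : ℤ) : ℂ), .J)]
  | (m, .J), (_, .L) => [((m : ℂ), .J)]
  | (m, .L), (n, .P i) => [(((m - n : ℤ) : ℂ), .P i)]
  | (m, .P i), (n, .L) => [(((m - n : ℤ) : ℂ), .P i)]
  | (_, .J), (_, .P i) => [((eps i 0 : ℂ), .P 0), ((eps i 1 : ℂ), .P 1)]
  | (_, .P i), (_, .J) => [(-(eps i 0 : ℂ), .P 0), (-(eps i 1 : ℂ), .P 1)]
  | _, _ => []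

noncomputable def central (α β : ℂ) : ℤ × GKind → ℤ × GKind → ℂ
  | (m, .L), (n, .L) => if m + n = 0 then α / 12 * ((m * (m ^ 2 - 1) : ℤ) : ℂ) else 0
  | (m, .J), (n, .J) => if m + n = 0 then β * m else 0
  | _, _ => 0

lemma lie_gen {α β : ℂ}
    (hLL : ∀ m n : ℤ, ⁅L m, L n⁆ = ((m - n : ℤ) : ℂ) • L (m + n)
      + (if m + n = 0 then (α / 12 * ((m * (m ^ 2 - 1) : ℤ) : ℂ)) • (1 : A) else 0))
    (hJJ : ∀ m n : ℤ, ⁅J m, J n⁆ = if m + n = 0 then (β * (m : ℂ)) • (1 : A) else 0)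
    (hLJ : ∀ m n : ℤ, ⁅L m, J n⁆ = ((-n : ℤ) : ℂ) • J (m + n))
    (hLP : ∀ (m n : ℤ) (i : Fin 2), ⁅L m, P i n⁆ = ((m - n : ℤ) : ℂ) • P i (m + n))
    (hJP : ∀ (m n : ℤ) (i : Fin 2),
      ⁅J m, P i n⁆ = ∑ j : Fin 2, (eps i j : ℂ) • P j (m + n))
    (hPP : ∀ (m n : ℤ) (i j : Fin 2), ⁅P i m, P j n⁆ = 0) (a b : ℤ × GKind) :
    ⁅gen L J P a, gen L J P b⁆ =
      ((coeff a b).map fun c => c.1 • gen L J P (a.1 + b.1, c.2)).sum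
        + central α β a b • (1 : A) := by
  obtain ⟨m, k⟩ := a
  obtain ⟨n, l⟩ := b
  cases k <;> cases l
  case L.L => simp [gen, coeff, central, hLL, ite_smul]
  case L.J => simp [gen, coeff, central, hLJ]
  case J.L =>
    simp only [gen, coeff, central]
    rw [Ring.lie_eq_neg_lie, hLJ]
    simp [add_comm]
  case J.J => simp [gen, coeff, central, hJJ, ite_smul]
  case L.P i => simp [gen, coeff, central, hLP]
  case P.L i =>
    simp only [gen, coeff, central]
    rw [Ring.lie_eq_neg_lie, hLP]
    simp [add_comm, ← neg_smul]
  case J.P i => simp [gen, coeff, central, hJP, Fin.sum_univ_two]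
  case P.J i =>
    simp only [gen, coeff, central]
    rw [Ring.lie_eq_neg_lie, hJP]
    simp [Fin.sum_univ_two, add_comm]
  case P.P i j => simp [gen, coeff, central, hPP]

lemma inIdeal_of_mem_coeff (a b : ℤ × GKind) (c : ℂ × GKind) (hc : c ∈ coeff a b) :
    inIdeal c.2 = (inIdeal a.2 || inIdeal b.2) := by
  obtain ⟨m, k⟩ := a
  obtain ⟨n, l⟩ := b
  cases k <;> cases l <;> simp [coeff] at hc <;> rcases hc with rfl | rfl <;> rfl

lemma coeff_eq_nil (a b : ℤ × GKind) (ha : inIdeal a.2) (hb : inIdeal b.2) : coeff a b = [] := by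
  obtain ⟨m, k⟩ := a
  obtain ⟨n, l⟩ := b
  cases k <;> cases l <;> simp_all [inIdeal, coeff]

lemma central_eq_zero (α β : ℂ) (a b : ℤ × GKind) (h : (inIdeal a.2 || inIdeal b.2)) :
    central α β a b = 0 := by
  obtain ⟨m, k⟩ := a
  obtain ⟨n, l⟩ := b
  cases k <;> cases l <;> simp_all [inIdeal, central]

def weight (h μ : ℂ) (ρ : Fin 2 → ℂ) : GKind → ℂ
  | .L => h
  | .J => μ
  | .P i => ρ i

variable {L J P} {v : A →ₗ[ℂ] ℂ}

lemma v_mul_gen_of_pos (hR : ∀ (x : A) (n : ℤ), 0 < n →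
      v (x * L n) = 0 ∧ v (x * J n) = 0 ∧ ∀ i, v (x * P i n) = 0)
    (x : A) (a : ℤ × GKind) (ha : 0 < a.1) : v (x * gen L J P a) = 0 := by
  obtain ⟨n, k⟩ := a
  obtain ⟨hL, hJ, hP⟩ := hR x n ha
  cases k
  exacts [hL, hJ, hP _]

lemma v_gen_mul_of_neg (hLft : ∀ (x : A) (n : ℤ), 0 < n →
      v (L (-n) * x) = 0 ∧ v (J (-n) * x) = 0 ∧ ∀ i, v (P i (-n) * x) = 0)
    (x : A) (a : ℤ × GKind) (ha : a.1 < 0) : v (gen L J P a * x) = 0 := by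
  obtain ⟨n, k⟩ := a
  obtain ⟨hL, hJ, hP⟩ := hLft x (-n) (by simpa using ha)
  rw [neg_neg] at hL hJ hP
  cases k
  exacts [hL, hJ, hP _]

lemma v_gen_zero {h μ : ℂ} {ρ : Fin 2 → ℂ} (hz : ∀ x : A,
      v (x * L 0) = h * v x ∧ v (L 0 * x) = h * v x ∧
      v (x * J 0) = μ * v x ∧ v (J 0 * x) = μ * v x ∧
      ∀ i, v (x * P i 0) = ρ i * v x ∧ v (P i 0 * x) = ρ i * v x) (x : A) (k : GKind) :
    v (x * gen L J P (0, k)) = weight h μ ρ k * v x ∧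
      v (gen L J P (0, k) * x) = weight h μ ρ k * v x := by
  obtain ⟨hL, hL', hJ, hJ', hP⟩ := hz x
  cases k
  exacts [⟨hL, hL'⟩, ⟨hJ, hJ'⟩, hP _]

end

end GKind

theorem VacuumModes.v_factor_gTilde {A : Type*} [Ring A] [Algebra ℂ A] {L J : ℤ → A}
    {P : Fin 2 → ℤ → A} (S : VacuumModes ℂ A GKind) (hX : S.X = GKind.gen L J P)
    (hI : S.inIdeal = GKind.inIdeal) (lA1 : List (ℤ × Bool)) (lB1 : List (ℤ × Fin 2))
    (lB2 : List (ℤ × Bool)) (lA2 : List (ℤ × Fin 2))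
    (hA1 : ∀ q ∈ lA1, 0 < q.1) (hB1 : ∀ q ∈ lB1, 0 < q.1)
    (hB2 : ∀ q ∈ lB2, 0 < q.1) (hA2 : ∀ q ∈ lA2, 0 < q.1)
    (hA : lA1.length = lA2.length) (hB : lB1.length = lB2.length) :
    S.v ((((lB1.map fun q => P q.2 q.1).reverse).prod)
          * (((lA1.map fun q => if q.2 then L q.1 else J q.1).reverse).prod)
          * ((lB2.map fun q => if q.2 then L (-q.1) else J (-q.1)).prod)
          * ((lA2.map fun q => P q.2 (-q.1)).prod))
        = S.v ((((lA1.map fun q => if q.2 then L q.1 else J q.1).reverse).prod)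
              * ((lA2.map fun q => P q.2 (-q.1)).prod))
          * S.v ((((lB1.map fun q => P q.2 q.1).reverse).prod)
              * ((lB2.map fun q => if q.2 then L (-q.1) else J (-q.1)).prod)) := by
  have h := S.v_W_factor ((lB1.map fun q => (q.1, GKind.P q.2)).reverse)
    ((lA1.map fun q => (q.1, GKind.lj q.2)).reverse) (lB2.map fun q => (-q.1, GKind.lj q.2))
    (lA2.map fun q => (-q.1, GKind.P q.2))
    (by simpa only [List.mem_reverse] using List.forall_mem_map.2 fun q hq =>
      ⟨hB1 q hq, by simp [hI, GKind.inIdeal]⟩)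
    (by simpa only [List.mem_reverse] using List.forall_mem_map.2 fun q hq =>
      ⟨hA1 q hq, by simp [hI, GKind.inIdeal_lj]⟩)
    (List.forall_mem_map.2 fun q hq =>
      ⟨neg_neg_of_pos (hB2 q hq), by simp [hI, GKind.inIdeal_lj]⟩)
    (List.forall_mem_map.2 fun q hq =>
      ⟨neg_neg_of_pos (hA2 q hq), by simp [hI, GKind.inIdeal]⟩)
    (by simpa using hB) (by simpa using hA)
  simpa [VacuumModes.W, hX, List.map_reverse, List.map_map, Function.comp_def, GKind.gen_lj,
    GKind.gen_P, mul_assoc] using h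

/-- A choice `(LJ)_{-A}` is encoded by a list of pairs (part, `true` for `L` / `false` for `J`),
and `(P¹P²)_{-A}` by a list of pairs (part, index of `P`); the bra, being `ω` of a ket, is the
reversed product with positive modes. -/
theorem stmt19 {A : Type*} [Ring A] [Algebra ℂ A]
    (h μ α β : ℂ) (ρ : Fin 2 → ℂ)
    (L J : ℤ → A) (P : Fin 2 → ℤ → A)
    (hLL : ∀ m n : ℤ, ⁅L m, L n⁆ = ((m - n : ℤ) : ℂ) • L (m + n)
      + (if m + n = 0 then (α / 12 * ((m * (m ^ 2 - 1) : ℤ) : ℂ)) • (1 : A) else 0))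
    (hJJ : ∀ m n : ℤ, ⁅J m, J n⁆ = if m + n = 0 then (β * (m : ℂ)) • (1 : A) else 0)
    (hLJ : ∀ m n : ℤ, ⁅L m, J n⁆ = ((-n : ℤ) : ℂ) • J (m + n))
    (hLP : ∀ (m n : ℤ) (i : Fin 2), ⁅L m, P i n⁆ = ((m - n : ℤ) : ℂ) • P i (m + n))
    (hJP : ∀ (m n : ℤ) (i : Fin 2),
      ⁅J m, P i n⁆ = ∑ j : Fin 2, (eps i j : ℂ) • P j (m + n))
    (hPP : ∀ (m n : ℤ) (i j : Fin 2), ⁅P i m, P j n⁆ = 0)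
    (v : A →ₗ[ℂ] ℂ) (hv1 : v 1 = 1)
    -- positive modes annihilate `|0⟩`:
    (hR : ∀ (x : A) (n : ℤ), 0 < n →
      v (x * L n) = 0 ∧ v (x * J n) = 0 ∧ ∀ i, v (x * P i n) = 0)
    -- negative modes annihilate `⟨0|`:
    (hLft : ∀ (x : A) (n : ℤ), 0 < n →
      v (L (-n) * x) = 0 ∧ v (J (-n) * x) = 0 ∧ ∀ i, v (P i (-n) * x) = 0)
    -- zero modes act by the highest weight on both sides:
    (hz : ∀ x : A,
      v (x * L 0) = h * v x ∧ v (L 0 * x) = h * v x ∧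
      v (x * J 0) = μ * v x ∧ v (J 0 * x) = μ * v x ∧
      ∀ i, v (x * P i 0) = ρ i * v x ∧ v (P i 0 * x) = ρ i * v x) :
    -- general factorization
    (∀ (lA1 : List (ℤ × Bool)) (lB1 : List (ℤ × Fin 2))
       (lB2 : List (ℤ × Bool)) (lA2 : List (ℤ × Fin 2)),
      (∀ q ∈ lA1, 0 < q.1) → (∀ q ∈ lB1, 0 < q.1) →
      (∀ q ∈ lB2, 0 < q.1) → (∀ q ∈ lA2, 0 < q.1) →
      (lA1.map Prod.fst).Pairwise (· ≥ ·) → (lB1.map Prod.fst).Pairwise (· ≥ ·) →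
      (lB2.map Prod.fst).Pairwise (· ≥ ·) → (lA2.map Prod.fst).Pairwise (· ≥ ·) →
      (lA1.map Prod.fst).Perm (lA2.map Prod.fst) →
      (lB1.map Prod.fst).Perm (lB2.map Prod.fst) →
      -- bra `⟨(LJ)_{-A}(P¹P²)_{-B}|` ket `|(LJ)_{-B}(P¹P²)_{-A}⟩`
      v ((((lB1.map fun q => P q.2 q.1).reverse).prod)
          * (((lA1.map fun q => if q.2 then L q.1 else J q.1).reverse).prod)
          * ((lB2.map fun q => if q.2 then L (-q.1) else J (-q.1)).prod)
          * ((lA2.map fun q => P q.2 (-q.1)).prod))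
        = v ((((lA1.map fun q => if q.2 then L q.1 else J q.1).reverse).prod)
              * ((lA2.map fun q => P q.2 (-q.1)).prod))
          * v ((((lB1.map fun q => P q.2 q.1).reverse).prod)
              * ((lB2.map fun q => if q.2 then L (-q.1) else J (-q.1)).prod))) ∧
    -- level-2 instance with A = (1), B = (1)
    v (P 0 1 * L 1 * J (-1) * P 1 (-1))
      = v (L 1 * P 1 (-1)) * v (P 0 1 * J (-1)) := by
  let S : VacuumModes ℂ A GKind :=
    { inIdeal := GKind.inIdeal
      X := GKind.gen L J P
      coeff := GKind.coeff
      central := GKind.central α β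
      lie_X := GKind.lie_gen L J P hLL hJJ hLJ hLP hJP hPP
      inIdeal_of_mem_coeff := GKind.inIdeal_of_mem_coeff
      coeff_eq_nil := GKind.coeff_eq_nil
      central_eq_zero := GKind.central_eq_zero α β
      v := v
      v_one := hv1
      v_mul_X_of_pos := GKind.v_mul_gen_of_pos hR
      v_X_mul_of_neg := GKind.v_gen_mul_of_neg hLft
      weight := GKind.weight h μ ρ
      v_mul_X_zero := fun x k => (GKind.v_gen_zero hz x k).1
      v_X_zero_mul := fun x k => (GKind.v_gen_zero hz x k).2 }
  have factor := S.v_factor_gTilde (L := L) (J := J) (P := P) rfl rfl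
  refine ⟨fun lA1 lB1 lB2 lA2 hA1 hB1 hB2 hA2 _ _ _ _ hA hB =>
    factor lA1 lB1 lB2 lA2 hA1 hB1 hB2 hA2 (by simpa using hA.length_eq)
      (by simpa using hB.length_eq), ?_⟩
  simpa using factor [(1, true)] [(1, 0)] [(1, false)] [(1, 1)]
    (by simp) (by simp) (by simp) (by simp) rfl rfl
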